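/- arXiv:1904.12441 — 3 statements merged into one kernel-verified Lean document; each statement's English description precedes it below -/
import Mathlib

section
/- Let q be an odd prime power, s an even divisor of q+1, h an integer with 1 ≤ h ≤ s/2, l = (q²-1)/s, and g a primitive element of F_{q²}. Then there exist u_0, ..., u_{h-1} ∈ F_q^* such that Σ_{k=0}^{h-1} g^{(2k+1)(μl - q - 1)} u_k = 0 for every integer μ with ⌈(s-h)/2⌉ + 1 ≤ μ ≤ ⌊(s+h)/2⌋ - 1. -/
/-!
Write `x_μ = g ^ (μ l - q - 1)`, so that the sum is `x_μ * U (x_μ ^ 2)` with `U = ∑ u_k X ^ k`.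
The squares `x_μ ^ 2`, `lo ≤ μ ≤ hi`, form a geometric progression `c, c β, …, c β ^ (m - 1)`
with ratio `β = g ^ (2 l)` of order `s / 2 > m`, and `x ↦ x ^ q` reverses it (`μ ↦ s - μ`).
Hence `P = ∏ (X - x_μ ^ 2)` has coefficients in `𝔽_q`, and none of them vanishes: writing
`∏_{j ≤ m} (X - c β ^ j)` both as `P (X - c β ^ m)` and as `(P with roots scaled by β) (X - c)`,
a vanishing coefficient forces `β ^ (m + 1) = 1`. Multiplying by factors `X - a`, `a ∈ 𝔽_q^*`
avoiding the ratios of consecutive coefficients, raises the degree to `h - 1` with all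
coefficients still nonzero; `u` is the list of coefficients.
-/

open Polynomial Finset

namespace Polynomial

def CoeffsNeZero {R : Type*} [Semiring R] (P : R[X]) : Prop :=
  ∀ i ≤ P.natDegree, P.coeff i ≠ 0

variable {K : Type*} [Field K]

theorem CoeffsNeZero.ne_zero {P : K[X]} (hP : CoeffsNeZero P) : P ≠ 0 :=
  fun h => hP 0 (Nat.zero_le _) (by simp [h])

theorem prod_X_sub_C_scaleRoots {ι : Type*} (s : Finset ι) (f : ι → K) (r : K) :
    (∏ i ∈ s, (X - C (f i))).scaleRoots r = ∏ i ∈ s, (X - C (f i * r)) := by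
  classical
  induction s using Finset.induction_on with
  | empty => simp
  | insert a s ha ih =>
    rw [prod_insert ha, prod_insert ha, mul_scaleRoots_of_noZeroDivisors, X_sub_C_scaleRoots, ih]

theorem coeffsNeZero_prod_X_sub_C_mul_pow {c β : K} (hc : c ≠ 0) {m : ℕ} (hβ : m < orderOf β) :
    CoeffsNeZero (∏ j ∈ range m, (X - C (c * β ^ j))) := by
  induction m with
  | zero => intro i hi; simp_all
  | succ m ih =>
    have hβ0 : β ≠ 0 := by
      rintro rfl
      simp at hβ
    set P := ∏ j ∈ range m, (X - C (c * β ^ j))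
    have hP : P.natDegree = m := by rw [natDegree_finsetProd_X_sub_C_eq_card, card_range]
    have hPm : P.coeff m = 1 := by
      rw [← hP]; exact monic_prod_of_monic _ _ (fun j _ => monic_X_sub_C _)
    specialize ih (by omega)
    have h_right : ∏ j ∈ range (m + 1), (X - C (c * β ^ j)) = P * (X - C (c * β ^ m)) :=
      prod_range_succ _ _
    -- the same product, with its roots read as `c` together with the roots of `P` scaled by `β`
    have h_left : ∏ j ∈ range (m + 1), (X - C (c * β ^ j)) = P.scaleRoots β * (X - C c) := by
      rw [prod_range_succ', prod_X_sub_C_scaleRoots]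
      simp [pow_succ, mul_assoc]
    intro i hi
    rw [natDegree_finsetProd_X_sub_C_eq_card, card_range] at hi
    rcases i with _ | a
    · rw [h_right, mul_coeff_zero]
      simp only [coeff_sub, coeff_X_zero, coeff_C_zero, zero_sub, mul_neg, ne_eq, neg_eq_zero,
        mul_eq_zero, hc, pow_eq_zero_iff', hβ0, false_and, or_false]
      exact ih 0 (by omega)
    rcases (Nat.lt_succ_iff.mp hi).eq_or_lt with rfl | ha
    · rw [h_right, coeff_mul_X_sub_C, hPm, coeff_eq_zero_of_natDegree_lt (by omega)]
      simp
    intro h0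
    have e_right := h_right ▸ h0
    have e_left := h_left ▸ h0
    rw [coeff_mul_X_sub_C] at e_right
    rw [coeff_mul_X_sub_C, coeff_scaleRoots, coeff_scaleRoots, hP] at e_left
    obtain ⟨k, hk, hk'⟩ : ∃ k, m - a = k + 1 ∧ m - (a + 1) = k := ⟨m - a - 1, by omega, by omega⟩
    rw [hk, hk'] at e_left
    have : P.coeff (a + 1) * c * β ^ k * (β ^ (m + 1) - 1) = 0 := by
      linear_combination e_left - β ^ (k + 1) * e_right
    simp only [mul_eq_zero, ih (a + 1) (by omega), hc, pow_eq_zero_iff', hβ0, sub_eq_zero,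
      false_or, false_and] at this
    exact pow_ne_one_of_lt_orderOf (by omega) hβ this

theorem exists_coeffsNeZero_mul_X_sub_C {P : K[X]} (hP : CoeffsNeZero P) {A : Finset K}
    (hA0 : 0 ∉ A) (hA : P.natDegree < #A) : ∃ c ∈ A, CoeffsNeZero (P * (X - C c)) := by
  classical
  -- `c` only has to avoid `0` and the `natDegree P` ratios of consecutive coefficients
  obtain ⟨c, hcA, hcB⟩ := exists_mem_notMem_of_card_lt_card
    (card_image_le.trans_lt ((card_range _).trans_lt hA) :
      #((range P.natDegree).image fun i => P.coeff i / P.coeff (i + 1)) < #A)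
  refine ⟨c, hcA, fun i hi => ?_⟩
  rw [natDegree_mul hP.ne_zero (X_sub_C_ne_zero c), natDegree_X_sub_C] at hi
  rcases i with _ | i
  · simpa [ne_of_mem_of_not_mem hcA hA0] using hP 0 (Nat.zero_le _)
  rw [coeff_mul_X_sub_C]
  rcases (Nat.lt_succ_iff.mp hi).lt_or_eq with hi | rfl
  · intro h
    refine hcB (mem_image.mpr ⟨i, mem_range.mpr hi, ?_⟩)
    rw [div_eq_iff (hP (i + 1) hi)]
    linear_combination h
  · simpa [coeff_eq_zero_of_natDegree_lt] using hP _ le_rfl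

theorem exists_coeffsNeZero_dvd (φ : K →+* K) {P : K[X]} (hP : CoeffsNeZero P)
    (hφP : P.map φ = P) {A : Finset K} (hA0 : 0 ∉ A) (hφA : ∀ a ∈ A, φ a = a) {d : ℕ}
    (hPd : P.natDegree ≤ d) (hdA : d ≤ #A) :
    ∃ Q : K[X], P ∣ Q ∧ Q.natDegree = d ∧ CoeffsNeZero Q ∧ Q.map φ = Q := by
  induction d, hPd using Nat.le_induction with
  | base => exact ⟨P, dvd_rfl, rfl, hP, hφP⟩
  | succ d _ ih =>
    obtain ⟨Q, hPQ, hQd, hQ, hφQ⟩ := ih (by omega)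
    obtain ⟨c, hcA, hc⟩ := exists_coeffsNeZero_mul_X_sub_C hQ hA0 (by omega)
    refine ⟨Q * (X - C c), dvd_mul_of_dvd_left hPQ _, ?_, hc, ?_⟩
    · rw [natDegree_mul hQ.ne_zero (X_sub_C_ne_zero c), hQd, natDegree_X_sub_C]
    · rw [Polynomial.map_mul, hφQ, Polynomial.map_sub, map_X, map_C, hφA c hcA]

theorem map_prod_X_sub_C_of_reflect (φ : K →+* K) {m : ℕ} (f : ℕ → K)
    (hf : ∀ j < m, φ (f j) = f (m - 1 - j)) :
    (∏ j ∈ range m, (X - C (f j))).map φ = ∏ j ∈ range m, (X - C (f j)) := by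
  rw [Polynomial.map_prod]
  simp only [Polynomial.map_sub, map_X, map_C]
  rw [prod_congr rfl fun j hj => by rw [hf j (mem_range.mp hj)]]
  exact prod_range_reflect (fun j => X - C (f j)) m

theorem exists_coeffsNeZero_eval_mul_pow_eq_zero (φ : K →+* K) {c β : K} (hc : c ≠ 0) {m d : ℕ}
    (hβ : m < orderOf β) (hφ : ∀ j < m, φ (c * β ^ j) = c * β ^ (m - 1 - j))
    {A : Finset K} (hA0 : 0 ∉ A) (hφA : ∀ a ∈ A, φ a = a) (hmd : m ≤ d) (hdA : d ≤ #A) :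
    ∃ Q : K[X], Q.natDegree = d ∧ CoeffsNeZero Q ∧ Q.map φ = Q ∧
      ∀ j < m, Q.eval (c * β ^ j) = 0 := by
  obtain ⟨Q, hPQ, hQd, hQ, hφQ⟩ := exists_coeffsNeZero_dvd φ
    (coeffsNeZero_prod_X_sub_C_mul_pow hc hβ) (map_prod_X_sub_C_of_reflect φ _ hφ) hA0 hφA
    (by rw [natDegree_finsetProd_X_sub_C_eq_card, card_range]; exact hmd) hdA
  refine ⟨Q, hQd, hQ, hφQ, fun j hj => ?_⟩
  obtain ⟨R, rfl⟩ := hPQ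
  rw [eval_mul, eval_prod, prod_eq_zero (mem_range.mpr hj) (by simp), zero_mul]

theorem sum_range_pow_two_mul_add_one_mul_coeff {R : Type*} [CommSemiring R] (Q : R[X]) {h : ℕ}
    (hQ : Q.natDegree < h) (y : R) :
    ∑ k ∈ range h, y ^ (2 * k + 1) * Q.coeff k = y * Q.eval (y ^ 2) := by
  rw [eval_eq_sum_range' hQ, mul_sum]
  exact sum_congr rfl fun k _ => by ring

end Polynomial

theorem exists_ringHom_eq_pow_of_dvd_card {F : Type*} [Field F] [Fintype F] {q : ℕ}
    (hq : q ∣ Fintype.card F) : ∃ φ : F →+* F, ∀ x, φ x = x ^ q := by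
  obtain ⟨p, hchar, n, hp, hcard⟩ := FiniteField.card' F
  obtain ⟨k, -, rfl⟩ := (Nat.dvd_prime_pow hp).mp (hcard ▸ hq)
  have := Fact.mk hp
  exact ⟨iterateFrobenius F p k, fun x => iterateFrobenius_def ..⟩

theorem exists_finset_pow_eq_self {K : Type*} [Field K] {q : ℕ} (hq : 1 ≤ q) {g : Kˣ}
    (hg : orderOf g = q ^ 2 - 1) : ∃ A : Finset K, 0 ∉ A ∧ (∀ a ∈ A, a ^ q = a) ∧ #A = q - 1 := by
  classical
  have hqg : q ^ 2 - 1 = (q + 1) * (q - 1) := by simpa using Nat.sq_sub_sq q 1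
  set w := ((g ^ (q + 1) : Kˣ) : K)
  have hw : orderOf w = q - 1 := by
    rw [orderOf_units, orderOf_pow_of_dvd (by omega) (hg ▸ hqg ▸ dvd_mul_right _ _), hg, hqg,
      Nat.mul_div_cancel_left _ (by omega)]
  have hwq : w ^ q = w := by
    rw [← Nat.sub_add_cancel hq, pow_succ, ← hw, pow_orderOf_eq_one, one_mul]
  refine ⟨(range (q - 1)).image (w ^ ·), ?_, ?_, ?_⟩
  · simp only [mem_image, not_exists, not_and]
    exact fun k _ => pow_ne_zero k (Units.ne_zero _)
  · simp only [mem_image, forall_exists_index, and_imp, forall_apply_eq_imp_iff₂]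
    exact fun k _ => by rw [← pow_mul, mul_comm, pow_mul, hwq]
  · rw [card_image_of_injOn, card_range]
    exact fun a ha b hb =>
      pow_injOn_Iio_orderOf (hw ▸ by simpa using ha) (hw ▸ by simpa using hb)

section

variable {G : Type*} [Group G] (g : G)

theorem orderOf_pow_two_mul {s l : ℕ} (hg : orderOf g ≠ 0) (hl : s * l = orderOf g)
    (hs : Even s) : orderOf (g ^ (2 * l)) = s / 2 := by
  obtain ⟨σ, rfl⟩ := hs
  have hl0 : l ≠ 0 := by rintro rfl; exact hg hl.symm
  rw [orderOf_pow_of_dvd (by omega) ⟨σ, by rw [← hl]; ring⟩, ← hl]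
  rw [show (σ + σ) * l = σ * (2 * l) by ring, Nat.mul_div_cancel _ (by omega)]
  omega

theorem sq_zpow_add_mul (q l μ j : ℕ) :
    (g ^ (((μ + j : ℕ) : ℤ) * l - q - 1)) ^ 2 =
      (g ^ ((μ : ℤ) * l - q - 1)) ^ 2 * (g ^ (2 * l)) ^ j := by
  simp only [← zpow_natCast, ← zpow_mul, ← zpow_add]
  congr 1
  push_cast
  ring

variable {g}

theorem sq_zpow_pow_eq {q s l : ℕ} (hg : orderOf g + 1 = q ^ 2) (hl : s * l = orderOf g)
    (hs : s ∣ q + 1) {μ μ' : ℕ} (hμ : μ + μ' = s) :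
    ((g ^ ((μ : ℤ) * l - q - 1)) ^ 2) ^ q = (g ^ ((μ' : ℤ) * l - q - 1)) ^ 2 := by
  obtain ⟨t, ht⟩ := hs
  simp only [← zpow_natCast, ← zpow_mul]
  rw [zpow_eq_zpow_iff_modEq, Int.modEq_iff_dvd]
  -- with `s t = q + 1`: `2 (μ' l - q - 1) - 2 (μ l - q - 1) q = (q ^ 2 - 1) (4 - 2 μ t)`
  refine ⟨4 - 2 * μ * t, ?_⟩
  have hg' : (orderOf g : ℤ) + 1 = q ^ 2 := by exact_mod_cast hg
  have hl' : (s : ℤ) * l = orderOf g := by exact_mod_cast hl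
  have ht' : (q : ℤ) + 1 = s * t := by exact_mod_cast ht
  have hμ' : (μ : ℤ) + μ' = s := by exact_mod_cast hμ
  push_cast
  linear_combination -2 * hg' + (2 - 2 * μ * t) * hl' - 2 * μ * l * ht' + 2 * l * hμ'

theorem sq_zpow_mul_pow_pow_eq {q s l : ℕ} (hg : orderOf g + 1 = q ^ 2) (hl : s * l = orderOf g)
    (hs : s ∣ q + 1) {lo hi : ℕ} (hlohi : lo + hi = s) {j : ℕ} (hj : j < hi + 1 - lo) :
    ((g ^ ((lo : ℤ) * l - q - 1)) ^ 2 * (g ^ (2 * l)) ^ j) ^ q =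
      (g ^ ((lo : ℤ) * l - q - 1)) ^ 2 * (g ^ (2 * l)) ^ (hi + 1 - lo - 1 - j) := by
  rw [← sq_zpow_add_mul, ← sq_zpow_add_mul]
  exact sq_zpow_pow_eq hg hl hs (by omega)

end

theorem stmt_11_general (q s h : ℕ)
    (hseven : Even s) (hsdvd : s ∣ q + 1)
    (hh : 1 ≤ h) (hhs : h ≤ s / 2)
    (F : Type*) [Field F] [Fintype F] (hF : Fintype.card F = q ^ 2)
    (g : Fˣ) (hg : orderOf g = q ^ 2 - 1) :
    ∃ u : ℕ → F, (∀ k < h, u k ≠ 0 ∧ (u k) ^ q = u k) ∧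
      ∀ μ : ℕ, (s - h + 1) / 2 + 1 ≤ μ → μ ≤ (s + h) / 2 - 1 →
        ∑ k ∈ Finset.range h,
          ((g ^ (((2 * k + 1 : ℕ) : ℤ) * ((μ : ℤ) * (((q ^ 2 - 1) / s : ℕ) : ℤ) - q - 1)) : Fˣ) : F)
            * u k = 0 := by
  obtain ⟨φ, hφ⟩ := exists_ringHom_eq_pow_of_dvd_card (hF ▸ dvd_pow_self q two_ne_zero)
  have hq : 2 ≤ q := by nlinarith [hF ▸ Fintype.one_lt_card (α := F)]
  have hsq : s ≤ q + 1 := Nat.le_of_dvd (by omega) hsdvd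
  have hs2 := Nat.even_iff.mp hseven
  have hg1 : orderOf g + 1 = q ^ 2 := by rw [hg]; exact Nat.sub_add_cancel (by nlinarith)
  have hl : s * ((q ^ 2 - 1) / s) = orderOf g := by
    rw [hg]
    exact Nat.mul_div_cancel' <|
      hsdvd.trans (Dvd.intro (q - 1) (by simpa using (Nat.sq_sub_sq q 1).symm))
  obtain ⟨A, hA0, hAq, hA⟩ := exists_finset_pow_eq_self (by omega) hg
  set l := (q ^ 2 - 1) / s
  set lo := (s - h + 1) / 2 + 1
  set hi := (s + h) / 2 - 1
  obtain ⟨Q, hQd, hQ, hφQ, hQ0⟩ := exists_coeffsNeZero_eval_mul_pow_eq_zero φ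
    (c := (((g ^ ((lo : ℤ) * l - q - 1)) ^ 2 : Fˣ) : F)) (β := ((g ^ (2 * l) : Fˣ) : F))
    (m := hi + 1 - lo) (d := h - 1) (Units.ne_zero _)
    (by rw [orderOf_units, orderOf_pow_two_mul g (by nlinarith) hl hseven]; omega)
    (fun j hj => by
      simpa only [hφ, Units.val_mul, Units.val_pow_eq_pow_val] using
        congrArg Units.val (sq_zpow_mul_pow_pow_eq hg1 hl hsdvd (by omega) hj))
    hA0 (fun a ha => (hφ a).trans (hAq a ha)) (by omega) (by omega)
  refine ⟨Q.coeff, fun k hk => ⟨hQ k (by omega), by rw [← hφ, ← coeff_map, hφQ]⟩,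
    fun μ hμ₁ hμ₂ => ?_⟩
  simp only [zpow_mul', zpow_natCast, Units.val_pow_eq_pow_val]
  rw [sum_range_pow_two_mul_add_one_mul_coeff Q (by omega)]
  obtain ⟨j, rfl⟩ : ∃ j, μ = lo + j := ⟨μ - lo, by omega⟩
  rw [← Units.val_pow_eq_pow_val, sq_zpow_add_mul, Units.val_mul,
    Units.val_pow_eq_pow_val (g ^ (2 * l)), hQ0 j (by omega), mul_zero]

theorem stmt_11 (q s h : ℕ) (hq : IsPrimePow q) (hqodd : Odd q)
    (hseven : Even s) (hsdvd : s ∣ q + 1)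
    (hh : 1 ≤ h) (hhs : h ≤ s / 2)
    (F : Type*) [Field F] [Fintype F] (hF : Fintype.card F = q ^ 2)
    (g : Fˣ) (hg : orderOf g = q ^ 2 - 1) :
    ∃ u : ℕ → F, (∀ k < h, u k ≠ 0 ∧ (u k) ^ q = u k) ∧
      ∀ μ : ℕ, (s - h + 1) / 2 + 1 ≤ μ → μ ≤ (s + h) / 2 - 1 →
        ∑ k ∈ Finset.range h,
          ((g ^ (((2 * k + 1 : ℕ) : ℤ) * ((μ : ℤ) * (((q ^ 2 - 1) / s : ℕ) : ℤ) - q - 1)) : Fˣ) : F)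
            * u k = 0 :=
  stmt_11_general q s h hseven hsdvd hh hhs F hF g hg
end

section
/- Let q be an odd prime power, t an even divisor of q-1 with t ≥ 2, m = (q²-1)/t, g a primitive element of F_{q²}, θ = g^t, and r an integer with 1 ≤ r ≤ t. Define vectors a₂, v₂ ∈ F_{q²}^{rm} by: for 0 ≤ k ≤ r-1 and 0 ≤ ν ≤ m-1, the (km+ν)-th coordinate of a₂ is g^k θ^ν and of v₂ is g^{ν t/2}. Then for all integers i, j with 0 ≤ i, j ≤ (q+1)/2 + (q-1)/t - 2, the sum Σ over all coordinates of a₂^{qi+j} · v₂^{q+1}, i.e. Σ_{k=0}^{r-1} Σ_{ν=0}^{m-1} (g^k θ^ν)^{qi+j} θ^{ν(q+1)/2}, equals 0 in F_{q²}. -/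
/-!
Write `θ = g ^ t`, of order `m = (q² - 1) / t`, and `n = q i + j + (q + 1) / 2`. Each inner sum
is `(g ^ k) ^ (q i + j) · ∑_{ν < m} (θ ^ n) ^ ν`, a geometric sum over the `m`-th root of unity
`θ ^ n`, which vanishes as soon as `θ ^ n ≠ 1`, i.e. `m ∤ n`. With `q = 2P + 1`, `t = 2e`,
`q - 1 = t d` and `P = e d`, one has `m = 2 (P + 1) d` and `n = 2 (P + 1) i + (P + 1) + (j - i)`,
and the bounds on `i, j` rule out `m ∣ n`.
-/

open Finset

lemma sum_range_orderOf_pow_mul_eq_zero {R : Type*} [Ring R] [NoZeroDivisors R] {x : R} {n : ℕ}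
    (hn : ¬ orderOf x ∣ n) : ∑ ν ∈ range (orderOf x), x ^ (ν * n) = 0 := by
  have hne : x ^ n ≠ 1 := mt orderOf_dvd_of_pow_eq_one hn
  have hpow : (x ^ n) ^ orderOf x = 1 := by
    rw [← pow_mul, mul_comm, pow_mul, pow_orderOf_eq_one, one_pow]
  simp_rw [mul_comm _ n, pow_mul]
  refine eq_zero_of_ne_zero_of_mul_left_eq_zero (sub_ne_zero.2 hne.symm) ?_
  rw [mul_neg_geom_sum, hpow, sub_self]

lemma two_mul_succ_mul_not_dvd (P d i j : ℕ) (hd : d ∣ P) (hdP : d ≤ P) (hi : i ≤ P + d - 1)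
    (hj : j ≤ P + d - 1) : ¬ 2 * (P + 1) * d ∣ (2 * P + 1) * i + j + (P + 1) := by
  rintro ⟨c, hc⟩
  obtain ⟨s, hs, hsd⟩ : ∃ s, (2 * P + 1) * i + j + (P + 1) = 2 * (P + 1) * s ∧ d ∣ s :=
    ⟨d * c, by rw [hc]; ring, dvd_mul_right d c⟩
  have hiP : i < 2 * (P + 1) := by omega
  have hjP : j < 2 * (P + 1) := by omega
  -- `j - i + (P + 1) ≡ 0 [MOD 2 (P + 1)]` forces `j - i = ± (P + 1)`, i.e. `s ∈ {i, i + 1}`.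
  have hsi : i ≤ s := by
    by_contra! h
    nlinarith [Nat.mul_le_mul_left (2 * (P + 1)) h]
  have hsi' : s ≤ i + 1 := by
    by_contra! h
    nlinarith [Nat.mul_le_mul_left (2 * (P + 1)) h]
  obtain rfl | rfl : s = i ∨ s = i + 1 := by omega
  · have hij : s = P + (j + 1) := by nlinarith
    have := Nat.le_of_dvd (by omega) ((Nat.dvd_add_right hd).mp (hij ▸ hsd))
    omega
  · have hji : j = i + P + 1 := by nlinarith
    have := Nat.le_of_dvd (by omega) hsd
    omega

lemma sq_sub_one_div_not_dvd {q t i j : ℕ} (hq : Odd q) (ht : Even t) (ht0 : 0 < t)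
    (htq : t ∣ q - 1) (hi : i ≤ (q + 1) / 2 + (q - 1) / t - 2)
    (hj : j ≤ (q + 1) / 2 + (q - 1) / t - 2) :
    ¬ (q ^ 2 - 1) / t ∣ q * i + j + (q + 1) / 2 := by
  obtain ⟨e, rfl⟩ := ht
  obtain ⟨d, hd⟩ := htq
  set P := e * d with hP
  have hqP : q = 2 * P + 1 := by
    have : (e + e) * d = 2 * P := by ring
    obtain ⟨k, rfl⟩ := hq
    omega
  subst hqP
  have hm : ((2 * P + 1) ^ 2 - 1) / (e + e) = 2 * (P + 1) * d := by
    rw [show (2 * P + 1) ^ 2 - 1 = (e + e) * (2 * (P + 1) * d) by rw [hP]; ring_nf; omega]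
    exact Nat.mul_div_cancel_left _ ht0
  have hd' : (2 * P + 1 - 1) / (e + e) = d := by rw [hd, Nat.mul_div_cancel_left _ ht0]
  have hhalf : (2 * P + 1 + 1) / 2 = P + 1 := by omega
  rw [hm, hhalf]
  rw [hd', hhalf] at hi hj
  exact two_mul_succ_mul_not_dvd P d i j (dvd_mul_left d e)
    (Nat.le_mul_of_pos_left d (by omega)) (by omega) (by omega)

theorem stmt_13_general (q t r : ℕ) (hqodd : Odd q) (hte : Even t)
    (ht2 : 2 ≤ t) (htdvd : t ∣ q - 1)
    (F : Type*) [Field F]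
    (g : F) (hg : orderOf g = q ^ 2 - 1)
    (i j : ℕ) (hi : i ≤ (q + 1) / 2 + (q - 1) / t - 2)
    (hj : j ≤ (q + 1) / 2 + (q - 1) / t - 2) :
    ∑ k ∈ Finset.range r, ∑ ν ∈ Finset.range ((q ^ 2 - 1) / t),
      (g ^ k * (g ^ t) ^ ν) ^ (q * i + j) * (g ^ t) ^ (ν * ((q + 1) / 2)) = 0 := by
  have htq2 : t ∣ q ^ 2 - 1 := htdvd.trans (by simpa using Nat.sub_dvd_pow_sub_pow q 1 2)
  have hθ : orderOf (g ^ t) = (q ^ 2 - 1) / t := by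
    rw [orderOf_pow_of_dvd (by omega) (hg ▸ htq2), hg]
  have hterm (k ν : ℕ) : (g ^ k * (g ^ t) ^ ν) ^ (q * i + j) * (g ^ t) ^ (ν * ((q + 1) / 2)) =
      (g ^ k) ^ (q * i + j) * (g ^ t) ^ (ν * (q * i + j + (q + 1) / 2)) := by ring
  have hn : ¬ orderOf (g ^ t) ∣ q * i + j + (q + 1) / 2 :=
    hθ ▸ sq_sub_one_div_not_dvd hqodd hte (by omega) htdvd hi hj
  refine sum_eq_zero fun k _ => ?_
  rw [sum_congr rfl fun ν _ => hterm k ν, ← mul_sum, ← hθ,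
    sum_range_orderOf_pow_mul_eq_zero hn, mul_zero]

theorem stmt_13 (q t r : ℕ) (hq : IsPrimePow q) (hqodd : Odd q) (hte : Even t)
    (ht2 : 2 ≤ t) (htdvd : t ∣ q - 1) (hr : 1 ≤ r) (hrt : r ≤ t)
    (F : Type*) [Field F] [Fintype F] (hF : Fintype.card F = q ^ 2)
    (g : F) (hg : orderOf g = q ^ 2 - 1)
    (i j : ℕ) (hi : i ≤ (q + 1) / 2 + (q - 1) / t - 2)
    (hj : j ≤ (q + 1) / 2 + (q - 1) / t - 2) :
    ∑ k ∈ Finset.range r, ∑ ν ∈ Finset.range ((q ^ 2 - 1) / t),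
      (g ^ k * (g ^ t) ^ ν) ^ (q * i + j) * (g ^ t) ^ (ν * ((q + 1) / 2)) = 0 :=
  stmt_13_general q t r hqodd hte ht2 htdvd F g hg i j hi hj
end

section
/- Let q be an odd prime power, s an odd divisor of q+1, h ≤ s-1 a positive integer, l = (q²-1)/s, g a primitive element of F_{q²}, and δ = g^s. Suppose u_0,...,u_{h-1} ∈ F_q^* satisfy Σ_{k=0}^{h-1} g^{k(μl-q-1)} u_k = 0 for all ⌈(s-h)/2⌉+1 ≤ μ ≤ ⌊(s+h)/2⌋-1, and let v_k ∈ F_{q²}^* with v_k^{q+1} = u_k. Define vectors a₁, v₁ ∈ F_{q²}^{lh} with coordinates indexed by (k,ν), 0 ≤ k ≤ h-1, 0 ≤ ν ≤ l-1, given by a₁ = g^k δ^ν and v₁ = v_k δ^ν. Then Σ_{k,ν} (g^k δ^ν)^{qi+j} (v_k δ^ν)^{q+1} = 0 in F_{q²} for all 0 ≤ i, j ≤ ⌊(s+h)/2⌋·((q+1)/s) - 3. -/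
/-!
Put `δ = g ^ s`, of order `l = (q² - 1)/s = m (q - 1)` where `q + 1 = s m`. The double sum factors
as `(∑ₖ g^{k(qi+j)} uₖ) · ∑_{ν<l} (δ^{qi+j+q+1})^ν`. The geometric sum vanishes unless
`l ∣ qi + j + q + 1`, say `qi + j + q + 1 = μ l`; the bounds on `i` and `j` then force
`s - ⌊(s+h)/2⌋ < μ < ⌊(s+h)/2⌋`, and for such `μ` the first factor is one of the sums assumed to vanish.
-/

open Finset

theorem geom_sum_pow_eq_zero_of_not_orderOf_dvd {R : Type*} [Ring R] [NoZeroDivisors R]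
    {δ : R} {N : ℕ} (hN : ¬ orderOf δ ∣ N) :
    ∑ ν ∈ range (orderOf δ), (δ ^ N) ^ ν = 0 := by
  have hne : δ ^ N ≠ 1 := fun h => hN (orderOf_dvd_of_pow_eq_one h)
  have hroot : (δ ^ N) ^ orderOf δ = 1 := by rw [pow_right_comm, pow_orderOf_eq_one, one_pow]
  have hmul := geom_sum_mul (δ ^ N) (orderOf δ)
  rw [hroot, sub_self] at hmul
  exact (mul_eq_zero.mp hmul).resolve_right (sub_ne_zero.mpr hne)

theorem orderOf_pow_of_orderOf_eq_mul {G : Type*} [Monoid G] {x : G} {s L : ℕ}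
    (h : orderOf x = s * L) (hs : 0 < s) : orderOf (x ^ s) = L := by
  rw [orderOf_pow_of_dvd hs.ne' ⟨L, h⟩, h, Nat.mul_div_cancel_left _ hs]

theorem sum_sum_mul_pow_mul_pow_eq {ι R : Type*} [CommSemiring R] (S : Finset ι) (a b : ι → R)
    (d : R) (e n L : ℕ) :
    ∑ k ∈ S, ∑ ν ∈ range L, (a k * d ^ ν) ^ e * (b k * d ^ ν) ^ n
      = (∑ k ∈ S, a k ^ e * b k ^ n) * ∑ ν ∈ range L, (d ^ (e + n)) ^ ν := by
  rw [sum_mul]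
  refine sum_congr rfl fun k _ => ?_
  rw [mul_sum]
  refine sum_congr rfl fun ν _ => ?_
  ring

theorem two_le_of_odd_of_add_one_eq_mul {q s m : ℕ} (hq : Odd q) (hs : Odd s)
    (hm : q + 1 = s * m) : 2 ≤ m := by
  have hmeven : Even m :=
    (Nat.even_mul.mp (hm ▸ hq.add_one)).resolve_left (Nat.not_even_iff_odd.mpr hs)
  have hm0 : m ≠ 0 := by rintro rfl; omega
  obtain ⟨t, rfl⟩ := hmeven
  omega

theorem lt_add_and_lt_of_add_eq_mul {q s m P i j μ : ℕ} (hm : q + 1 = s * m) (hPs : P < s)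
    (hi : i + 3 ≤ P * m) (hj : j + 3 ≤ P * m)
    (hμ : q * i + j + (q + 1) = m * (q - 1) * μ) : s < P + μ ∧ μ < P := by
  have hq : 2 ≤ q := by
    by_contra! hq
    rw [Nat.sub_eq_zero_of_le (by omega), mul_zero, zero_mul] at hμ
    omega
  obtain ⟨r, rfl, hr⟩ : ∃ r, q = r + 1 ∧ 0 < r := ⟨q - 1, by omega, by omega⟩
  simp only [Nat.add_sub_cancel] at hμ
  constructor
  · by_contra! h
    -- `(r+1) i + j + r + 2 ≡ i + j + 2 (mod r)`, so `i + j + 2` is a positive multiple `r c`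
    obtain ⟨c, hc⟩ : r ∣ i + j + 2 :=
      (Nat.dvd_add_right (dvd_mul_right r (i + 1))).mp ⟨m * μ, by linarith⟩
    have hμc : i + 1 + c = m * μ := Nat.eq_of_mul_eq_mul_left hr (by linarith)
    have hc1 : 1 ≤ c := Nat.pos_of_ne_zero fun h0 => by simp [h0] at hc
    have := Nat.mul_le_mul_left r hc1
    have := Nat.mul_le_mul_right m h
    nlinarith
  · by_contra! h
    have := Nat.mul_le_mul_left (m * r) h
    have := Nat.mul_le_mul_left (r + 1) hi
    have := Nat.mul_le_mul_right m hPs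
    nlinarith

theorem stmt_19_general (q s h : ℕ) (hqodd : Odd q)
    (hsodd : Odd s) (hsdvd : s ∣ q + 1)
    (hh : 1 ≤ h) (hhs : h ≤ s - 1)
    (F : Type*) [Field F]
    (g : Fˣ) (hg : orderOf g = q ^ 2 - 1)
    (u v : ℕ → F)
    (humu : ∀ μ : ℕ, (s - h + 1) / 2 + 1 ≤ μ → μ ≤ (s + h) / 2 - 1 →
      ∑ k ∈ Finset.range h,
        ((g ^ ((k : ℤ) * ((μ : ℤ) * (((q ^ 2 - 1) / s : ℕ) : ℤ) - q - 1)) : Fˣ) : F) * u k = 0)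
    (hv : ∀ k < h, (v k) ^ (q + 1) = u k)
    (i j : ℕ) (hi : i ≤ (s + h) / 2 * ((q + 1) / s) - 3)
    (hj : j ≤ (s + h) / 2 * ((q + 1) / s) - 3) :
    ∑ k ∈ Finset.range h, ∑ ν ∈ Finset.range ((q ^ 2 - 1) / s),
      ((g : F) ^ k * ((g : F) ^ s) ^ ν) ^ (q * i + j)
        * (v k * ((g : F) ^ s) ^ ν) ^ (q + 1) = 0 := by
  obtain ⟨m, hm⟩ := hsdvd
  set P := (s + h) / 2
  have hs : 0 < s := by omega
  have hP : 2 ≤ P := by obtain ⟨t, rfl⟩ := hsodd; omega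
  have hPm : 4 ≤ P * m := Nat.mul_le_mul hP (two_le_of_odd_of_add_one_eq_mul hqodd hsodd hm)
  rw [hm, Nat.mul_div_cancel_left m hs] at hi hj
  have hq21 : q ^ 2 - 1 = s * (m * (q - 1)) := by
    rw [← mul_assoc, ← hm]; simpa using Nat.sq_sub_sq q 1
  have hl : (q ^ 2 - 1) / s = m * (q - 1) := by rw [hq21, Nat.mul_div_cancel_left _ hs]
  have horder : orderOf ((g : F) ^ s) = m * (q - 1) :=
    orderOf_pow_of_orderOf_eq_mul (by rw [orderOf_units, hg, hq21]) hs
  rw [sum_sum_mul_pow_mul_pow_eq, hl, ← horder]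
  by_cases hdvd : orderOf ((g : F) ^ s) ∣ q * i + j + (q + 1)
  · obtain ⟨μ, hμ⟩ := hdvd
    rw [horder] at hμ
    obtain ⟨hμQ, hμP⟩ := lt_add_and_lt_of_add_eq_mul (P := P) hm (by omega) (by omega) (by omega) hμ
    suffices ∑ k ∈ range h, ((g : F) ^ k) ^ (q * i + j) * v k ^ (q + 1) = 0 by rw [this, zero_mul]
    rw [← humu μ (by omega) (by omega), hl]
    refine sum_congr rfl fun k hk => ?_
    have hexp : (k : ℤ) * (μ * (m * (q - 1) : ℕ) - q - 1) = (k * (q * i + j) : ℕ) := by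
      have hμℤ : ((q * i + j + (q + 1) : ℕ) : ℤ) = (m * (q - 1) * μ : ℕ) := congrArg _ hμ
      push_cast at hμℤ ⊢
      linear_combination -(k : ℤ) * hμℤ
    rw [hv k (mem_range.mp hk), hexp, zpow_natCast, Units.val_pow_eq_pow_val, pow_mul]
  · rw [geom_sum_pow_eq_zero_of_not_orderOf_dvd hdvd, mul_zero]

theorem stmt_19 (q s h : ℕ) (hq : IsPrimePow q) (hqodd : Odd q)
    (hsodd : Odd s) (hsdvd : s ∣ q + 1)
    (hh : 1 ≤ h) (hhs : h ≤ s - 1)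
    (F : Type*) [Field F] [Fintype F] (hF : Fintype.card F = q ^ 2)
    (g : Fˣ) (hg : orderOf g = q ^ 2 - 1)
    (u v : ℕ → F)
    (hu : ∀ k < h, u k ≠ 0 ∧ (u k) ^ q = u k)
    (humu : ∀ μ : ℕ, (s - h + 1) / 2 + 1 ≤ μ → μ ≤ (s + h) / 2 - 1 →
      ∑ k ∈ Finset.range h,
        ((g ^ ((k : ℤ) * ((μ : ℤ) * (((q ^ 2 - 1) / s : ℕ) : ℤ) - q - 1)) : Fˣ) : F) * u k = 0)
    (hv : ∀ k < h, (v k) ^ (q + 1) = u k)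
    (i j : ℕ) (hi : i ≤ (s + h) / 2 * ((q + 1) / s) - 3)
    (hj : j ≤ (s + h) / 2 * ((q + 1) / s) - 3) :
    ∑ k ∈ Finset.range h, ∑ ν ∈ Finset.range ((q ^ 2 - 1) / s),
      ((g : F) ^ k * ((g : F) ^ s) ^ ν) ^ (q * i + j)
        * (v k * ((g : F) ^ s) ^ ν) ^ (q + 1) = 0 :=
  stmt_19_general q s h hqodd hsodd hsdvd hh hhs F g hg u v humu hv i j hi hj
end
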